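/- The function T(a) = cosh(a) · ∫₁^∞ (s^(2n−2) − 1)^(−1/2) · (cosh²(a)·s² − 1)^(−1/2) ds is strictly decreasing in a on (0, ∞). -/

import Mathlib

open Real MeasureTheory Set

/-!
Writing `c = cosh a > 1` and `m = 2n - 2`, the identity `√(c²s² - 1) = c √(s² - c⁻²)` turns
`c ∫ ds / (√(sᵐ - 1) √(c²s² - 1))` into `∫ ds / (√(sᵐ - 1) √(s² - c⁻²))`, whose integrand
strictly decreases in `c` at every `s > 1`; since `cosh` is strictly increasing on `(0, ∞)`, so
is the composite. The integrals converge because the integrand is `O((s - 1)^(-1/2))` near `1`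
and `O(s⁻²)` at infinity.
-/

noncomputable def heightIntegrand (m : ℕ) (c s : ℝ) : ℝ :=
  1 / (√(s ^ m - 1) * √(c ^ 2 * s ^ 2 - 1))

lemma one_div_sqrt_mul_sqrt_le {x y x' y' : ℝ} (hx' : 0 < x') (hy' : 0 < y') (hx : x' ≤ x)
    (hy : y' ≤ y) : 1 / (√x * √y) ≤ 1 / (√x' * √y') :=
  one_div_le_one_div_of_le (by positivity)
    (mul_le_mul (sqrt_le_sqrt hx) (sqrt_le_sqrt hy) (sqrt_nonneg _) (sqrt_nonneg _))

lemma measurable_heightIntegrand (m : ℕ) (c : ℝ) : Measurable (heightIntegrand m c) := by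
  unfold heightIntegrand; fun_prop

lemma heightIntegrand_nonneg (m : ℕ) (c s : ℝ) : 0 ≤ heightIntegrand m c s := by
  unfold heightIntegrand; positivity

lemma integrableOn_heightIntegrand_Ioc {m : ℕ} {c : ℝ} (hm : m ≠ 0) (hc : 1 < c) :
    IntegrableOn (heightIntegrand m c) (Ioc 1 2) := by
  have hmaj :
      IntegrableOn (fun s : ℝ => (√(c ^ 2 - 1))⁻¹ * (s - 1) ^ (-(1 / 2) : ℝ)) (Ioc 1 2) := by
    have h := (intervalIntegral.intervalIntegrable_rpow' (r := -(1 / 2)) (by norm_num)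
      (a := 0) (b := 1)).comp_sub_right 1
    norm_num at h
    rw [intervalIntegrable_iff_integrableOn_Ioc_of_le one_le_two] at h
    exact h.const_mul _
  refine hmaj.mono' (measurable_heightIntegrand m c).aestronglyMeasurable.restrict
    ((ae_restrict_iff' measurableSet_Ioc).2 (Filter.Eventually.of_forall fun s ⟨hs1, _⟩ => ?_))
  rw [norm_of_nonneg (heightIntegrand_nonneg m c s), rpow_neg (by linarith), ← sqrt_eq_rpow,
    ← mul_inv, mul_comm, ← one_div]
  refine one_div_sqrt_mul_sqrt_le (by linarith) (by nlinarith) ?_ ?_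
  · linarith [le_self_pow₀ hs1.le hm]
  · nlinarith [one_lt_pow₀ hs1 two_ne_zero]

lemma integrableOn_heightIntegrand_Ioi_two {m : ℕ} {c : ℝ} (hm : 2 ≤ m) (hc : 1 ≤ c) :
    IntegrableOn (heightIntegrand m c) (Ioi 2) := by
  have hmaj : IntegrableOn (fun s : ℝ => 2 * s ^ (-2 : ℝ)) (Ioi 2) :=
    (integrableOn_Ioi_rpow_of_lt (by norm_num) two_pos).const_mul 2
  refine hmaj.mono' (measurable_heightIntegrand m c).aestronglyMeasurable.restrict
    ((ae_restrict_iff' measurableSet_Ioi).2 (Filter.Eventually.of_forall fun s (hs : 2 < s) => ?_))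
  have hs2 : s ^ 2 ≤ s ^ m := pow_le_pow_right₀ (by linarith) hm
  calc ‖heightIntegrand m c s‖ ≤ 1 / (√(s ^ 2 / 2) * √(s ^ 2 / 2)) := by
        rw [norm_of_nonneg (heightIntegrand_nonneg m c s)]
        exact one_div_sqrt_mul_sqrt_le (by positivity) (by positivity) (by nlinarith)
          (by nlinarith [mul_le_mul_of_nonneg_right (one_le_pow₀ (n := 2) hc) (sq_nonneg s)])
    _ = 2 * s ^ (-2 : ℝ) := by
        rw [mul_self_sqrt (by positivity), rpow_neg (by linarith), rpow_two]
        field_simp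

lemma integrableOn_heightIntegrand {m : ℕ} {c : ℝ} (hm : 2 ≤ m) (hc : 1 < c) :
    IntegrableOn (heightIntegrand m c) (Ioi 1) := by
  rw [← Ioc_union_Ioi_eq_Ioi one_le_two]
  exact (integrableOn_heightIntegrand_Ioc (by omega) hc).union
    (integrableOn_heightIntegrand_Ioi_two hm hc.le)

lemma sqrt_sq_mul_sub_one_div {c : ℝ} (hc : 0 < c) (x : ℝ) :
    √(c ^ 2 * x - 1) / c = √(x - (c ^ 2)⁻¹) := by
  rw [div_eq_iff hc.ne', show c ^ 2 * x - 1 = c ^ 2 * (x - (c ^ 2)⁻¹) by field_simp,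
    sqrt_mul (by positivity), sqrt_sq hc.le, mul_comm]

lemma strictAntiOn_mul_heightIntegrand {m : ℕ} {s : ℝ} (hm : m ≠ 0) (hs : 1 < s) :
    StrictAntiOn (fun c => c * heightIntegrand m c s) (Ioi 1) := by
  have hrescale : ∀ c : ℝ, 0 < c →
      c * heightIntegrand m c s = 1 / (√(s ^ m - 1) * √(s ^ 2 - (c ^ 2)⁻¹)) := by
    intro c hc
    rw [heightIntegrand, ← sqrt_sq_mul_sub_one_div hc]
    field_simp
  intro c (hc : 1 < c) d (hd : 1 < d) hcd
  have hA : 0 < √(s ^ m - 1) := sqrt_pos.2 (by linarith [one_lt_pow₀ hs hm])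
  have hcd' : (d ^ 2)⁻¹ < (c ^ 2)⁻¹ := inv_strictAnti₀ (by positivity) (by nlinarith)
  have hc' : (c ^ 2)⁻¹ < s ^ 2 := (inv_lt_one_of_one_lt₀ (one_lt_pow₀ hc two_ne_zero)).trans
    (one_lt_pow₀ hs two_ne_zero)
  change d * _ < c * _
  rw [hrescale c (by linarith), hrescale d (by linarith)]
  exact one_div_lt_one_div_of_lt (mul_pos hA (sqrt_pos.2 (by linarith)))
    (mul_lt_mul_of_pos_left (sqrt_lt_sqrt (by linarith) (by linarith)) hA)

lemma setIntegral_lt_setIntegral_of_forall_lt {X : Type*} [MeasurableSpace X] {μ : Measure X}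
    {s : Set X} {f g : X → ℝ} (hs : MeasurableSet s) (hμs : μ s ≠ 0) (hf : IntegrableOn f s μ)
    (hg : IntegrableOn g s μ) (hlt : ∀ x ∈ s, f x < g x) :
    ∫ x in s, f x ∂μ < ∫ x in s, g x ∂μ := by
  rw [← sub_pos, ← integral_sub hg hf]
  refine (setIntegral_pos_iff_support_of_nonneg_ae (f := fun x => g x - f x) ?_ (hg.sub hf)).2 ?_
  · filter_upwards [ae_restrict_mem hs] with x hx using (sub_pos.2 (hlt x hx)).le
  · have hsupp : s ⊆ Function.support fun x => g x - f x :=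
      fun x hx => Function.mem_support.2 (sub_pos.2 (hlt x hx)).ne'
    rwa [inter_eq_self_of_subset_right hsupp, pos_iff_ne_zero]

lemma strictAntiOn_mul_integral_heightIntegrand {m : ℕ} (hm : 2 ≤ m) :
    StrictAntiOn (fun c => c * ∫ s in Ioi 1, heightIntegrand m c s) (Ioi 1) := by
  intro c (hc : 1 < c) d (hd : 1 < d) hcd
  simp only [← integral_const_mul]
  exact setIntegral_lt_setIntegral_of_forall_lt measurableSet_Ioi (by simp)
    ((integrableOn_heightIntegrand hm hd).const_mul d)
    ((integrableOn_heightIntegrand hm hc).const_mul c)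
    fun s hs => strictAntiOn_mul_heightIntegrand (by omega) hs hc hd hcd

/-- T is strictly decreasing on (0, ∞). -/
theorem md_asymptotic_height_strictAntiOn (n : ℕ) (hn : 2 ≤ n) :
    StrictAntiOn (fun a : ℝ => Real.cosh a * (∫ s in Set.Ioi (1:ℝ),
        1 / (Real.sqrt (s ^ (2 * n - 2) - 1) * Real.sqrt (Real.cosh a ^ 2 * s ^ 2 - 1))))
      (Set.Ioi 0) :=
  (strictAntiOn_mul_integral_heightIntegrand (by omega)).comp_strictMonoOn
    (cosh_strictMonoOn.mono Ioi_subset_Ici_self) fun _ ha => one_lt_cosh.2 (ne_of_gt ha)
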